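/- Let b1, b2 > 0, let u, v, t > 0 satisfy u·t < 1 and v·t < 1, and let n ≥ 1 be an integer. Then (−1)^n·((1+ut)^{−b1}(1+vt)^{−b2} − Σ_{k=0}^{n−1} (−1)^k t^k Σ_{m=0}^{k} (b1)_m (b2)_{k−m} u^m v^{k−m}/(m!(k−m)!)) > 0. -/

import Mathlib

/-!
Write `F_{b₁,b₂}(t) = (1+ut)^{-b₁}(1+vt)^{-b₂}` and `R^n_{b₁,b₂}` for its tail after `n` terms of
the double binomial series. `F` satisfies `F' = -(b₁u F_{b₁+1,b₂} + b₂v F_{b₁,b₂+1})`, and thanks to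
the coefficient recursion `(k+1) c_{k+1}(b₁,b₂) = b₁u c_k(b₁+1,b₂) + b₂v c_k(b₁,b₂+1)` the partial
sums obey the same identity with `n+1` terms on the left and `n` on the right. Hence
`(-1)^{n+1} R^{n+1}_{b₁,b₂}` has derivative `b₁u (-1)^n R^n_{b₁+1,b₂} + b₂v (-1)^n R^n_{b₁,b₂+1}`,
which is positive for `t > 0` by induction on `n` (simultaneously for all `b₁, b₂ > 0`). As
`R^{n+1}` vanishes at `t = 0`, the mean value theorem finishes the induction step.
-/

open Real

/-- Rising factorial (Pochhammer symbol) `(a)_k`. -/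
noncomputable def poch (a : ℝ) (k : ℕ) : ℝ := (ascPochhammer ℝ k).eval a

open Finset

lemma poch_succ (a : ℝ) (m : ℕ) : poch a (m + 1) = a * poch (a + 1) m := by
  simp [poch, ascPochhammer_succ_left, Polynomial.eval_comp]

/-- The `m`-th coefficient `(b)_m u^m / m!` of the binomial series of `(1 - ut)^{-b}`. -/
noncomputable def binomTerm (b u : ℝ) (m : ℕ) : ℝ := poch b m * u ^ m / m.factorial

lemma succ_mul_binomTerm_succ (b u : ℝ) (m : ℕ) :
    ((m : ℝ) + 1) * binomTerm b u (m + 1) = b * u * binomTerm (b + 1) u m := by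
  rw [binomTerm, binomTerm, poch_succ, Nat.factorial_succ, pow_succ]
  push_cast
  field_simp

noncomputable def doubleCoeff (b1 b2 u v : ℝ) (k : ℕ) : ℝ :=
  ∑ p ∈ antidiagonal k, binomTerm b1 u p.1 * binomTerm b2 v p.2

lemma doubleCoeff_eq_sum_range (b1 b2 u v : ℝ) (k : ℕ) :
    doubleCoeff b1 b2 u v k = ∑ m ∈ range (k + 1),
      poch b1 m * poch b2 (k - m) * u ^ m * v ^ (k - m) /
        ((Nat.factorial m : ℝ) * (Nat.factorial (k - m) : ℝ)) := by
  rw [doubleCoeff, Nat.sum_antidiagonal_eq_sum_range_succ_mk]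
  refine sum_congr rfl fun m _ => ?_
  rw [binomTerm, binomTerm, div_mul_div_comm]
  ring

lemma doubleCoeff_zero (b1 b2 u v : ℝ) : doubleCoeff b1 b2 u v 0 = 1 := by
  simp [doubleCoeff, binomTerm, poch]

lemma succ_mul_doubleCoeff_succ (b1 b2 u v : ℝ) (k : ℕ) :
    ((k : ℝ) + 1) * doubleCoeff b1 b2 u v (k + 1) =
      b1 * u * doubleCoeff (b1 + 1) b2 u v k + b2 * v * doubleCoeff b1 (b2 + 1) u v k := by
  have first : ∑ p ∈ antidiagonal (k + 1),
      (p.1 : ℝ) * (binomTerm b1 u p.1 * binomTerm b2 v p.2) =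
        b1 * u * doubleCoeff (b1 + 1) b2 u v k := by
    rw [Nat.sum_antidiagonal_succ, doubleCoeff, mul_sum, Nat.cast_zero, zero_mul, zero_add]
    refine sum_congr rfl fun p _ => ?_
    rw [Nat.cast_succ, ← mul_assoc, succ_mul_binomTerm_succ]
    ring
  have second : ∑ p ∈ antidiagonal (k + 1),
      (p.2 : ℝ) * (binomTerm b1 u p.1 * binomTerm b2 v p.2) =
        b2 * v * doubleCoeff b1 (b2 + 1) u v k := by
    rw [Nat.sum_antidiagonal_succ', doubleCoeff, mul_sum, Nat.cast_zero, zero_mul, zero_add]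
    refine sum_congr rfl fun p _ => ?_
    rw [Nat.cast_succ, mul_left_comm, succ_mul_binomTerm_succ]
    ring
  rw [← first, ← second, ← sum_add_distrib, doubleCoeff, mul_sum]
  refine sum_congr rfl fun p hp => ?_
  have hk : (k : ℝ) + 1 = p.1 + p.2 := by exact_mod_cast (mem_antidiagonal.1 hp).symm
  rw [hk]
  ring

noncomputable def binomProd (b1 b2 u v t : ℝ) : ℝ := (1 + u * t) ^ (-b1) * (1 + v * t) ^ (-b2)

noncomputable def doublePartialSum (b1 b2 u v : ℝ) (n : ℕ) (t : ℝ) : ℝ :=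
  ∑ k ∈ range n, (-1 : ℝ) ^ k * t ^ k * doubleCoeff b1 b2 u v k

noncomputable def doubleTail (b1 b2 u v : ℝ) (n : ℕ) (t : ℝ) : ℝ :=
  binomProd b1 b2 u v t - doublePartialSum b1 b2 u v n t

lemma hasDerivAt_one_add_mul_rpow_neg (b u s : ℝ) (hs : 0 < 1 + u * s) :
    HasDerivAt (fun t => (1 + u * t) ^ (-b)) (-(b * u * (1 + u * s) ^ (-(b + 1)))) s := by
  have hlin : HasDerivAt (fun t : ℝ => 1 + u * t) u s := by
    simpa using ((hasDerivAt_id s).const_mul u).const_add 1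
  have h := (Real.hasDerivAt_rpow_const (p := -b) (Or.inl hs.ne')).comp s hlin
  rw [show -b - 1 = -(b + 1) by ring] at h
  exact h.congr_deriv (by ring)

lemma hasDerivAt_binomProd (b1 b2 u v s : ℝ) (hus : 0 < 1 + u * s) (hvs : 0 < 1 + v * s) :
    HasDerivAt (binomProd b1 b2 u v)
      (-(b1 * u * binomProd (b1 + 1) b2 u v s + b2 * v * binomProd b1 (b2 + 1) u v s)) s := by
  refine ((hasDerivAt_one_add_mul_rpow_neg b1 u s hus).mul
    (hasDerivAt_one_add_mul_rpow_neg b2 v s hvs)).congr_deriv ?_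
  simp only [binomProd]
  ring

lemma hasDerivAt_doublePartialSum (b1 b2 u v s : ℝ) (n : ℕ) :
    HasDerivAt (doublePartialSum b1 b2 u v (n + 1))
      (-(b1 * u * doublePartialSum (b1 + 1) b2 u v n s +
        b2 * v * doublePartialSum b1 (b2 + 1) u v n s)) s := by
  induction n with
  | zero =>
    have hconst : doublePartialSum b1 b2 u v 1 = fun _ => 1 := by
      funext t
      simp [doublePartialSum, doubleCoeff_zero]
    rw [hconst]
    exact (hasDerivAt_const s (1 : ℝ)).congr_deriv (by simp [doublePartialSum])
  | succ n ih =>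
    have hterm : HasDerivAt
        (fun t => (-1 : ℝ) ^ (n + 1) * t ^ (n + 1) * doubleCoeff b1 b2 u v (n + 1))
        ((-1 : ℝ) ^ (n + 1) * (((n + 1 : ℕ) : ℝ) * s ^ n) * doubleCoeff b1 b2 u v (n + 1)) s :=
      ((hasDerivAt_pow (n + 1) s).const_mul _).mul_const _
    have hsplit : doublePartialSum b1 b2 u v (n + 1 + 1) = fun t =>
        doublePartialSum b1 b2 u v (n + 1) t +
          (-1 : ℝ) ^ (n + 1) * t ^ (n + 1) * doubleCoeff b1 b2 u v (n + 1) := by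
      funext t
      exact sum_range_succ _ _
    rw [hsplit]
    refine (ih.add hterm).congr_deriv ?_
    simp only [doublePartialSum, sum_range_succ, Nat.cast_succ]
    linear_combination (-1 : ℝ) ^ (n + 1) * s ^ n * succ_mul_doubleCoeff_succ b1 b2 u v n

lemma hasDerivAt_doubleTail (b1 b2 u v s : ℝ) (n : ℕ) (hus : 0 < 1 + u * s)
    (hvs : 0 < 1 + v * s) :
    HasDerivAt (doubleTail b1 b2 u v (n + 1))
      (-(b1 * u * doubleTail (b1 + 1) b2 u v n s + b2 * v * doubleTail b1 (b2 + 1) u v n s)) s := by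
  refine ((hasDerivAt_binomProd b1 b2 u v s hus hvs).sub
    (hasDerivAt_doublePartialSum b1 b2 u v s n)).congr_deriv ?_
  simp only [doubleTail]
  ring

lemma doubleTail_succ_zero (b1 b2 u v : ℝ) (n : ℕ) : doubleTail b1 b2 u v (n + 1) 0 = 0 := by
  rw [doubleTail, doublePartialSum, sum_range_succ', sum_eq_zero fun k _ => by simp]
  simp [binomProd, doubleCoeff_zero]

lemma lt_of_hasDerivAt_pos {f f' : ℝ → ℝ} {a b : ℝ} (hab : a < b)
    (hf : ∀ x ∈ Set.Icc a b, HasDerivAt f (f' x) x) (hf' : ∀ x ∈ Set.Ioo a b, 0 < f' x) :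
    f a < f b := by
  refine strictMonoOn_of_hasDerivWithinAt_pos (convex_Icc a b)
    (fun x hx => (hf x hx).continuousAt.continuousWithinAt)
    (fun x hx => (hf x (interior_subset hx)).hasDerivWithinAt) (fun x hx => ?_)
    (Set.left_mem_Icc.2 hab.le) (Set.right_mem_Icc.2 hab.le) hab
  exact hf' x (by rwa [interior_Icc] at hx)

lemma neg_one_pow_mul_doubleTail_pos {u v : ℝ} (hu : 0 < u) (hv : 0 < v) (n : ℕ) :
    ∀ {b1 b2 t : ℝ}, 0 < b1 → 0 < b2 → 0 < t → 0 < (-1 : ℝ) ^ n * doubleTail b1 b2 u v n t := by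
  induction n with
  | zero =>
    intro b1 b2 t _ _ ht
    simp only [doubleTail, doublePartialSum, binomProd, pow_zero, one_mul, range_zero, sum_empty,
      sub_zero]
    positivity
  | succ n ih =>
    intro b1 b2 t hb1 hb2 ht
    let D s := b1 * u * ((-1) ^ n * doubleTail (b1 + 1) b2 u v n s) +
      b2 * v * ((-1) ^ n * doubleTail b1 (b2 + 1) u v n s)
    have hderiv : ∀ s ∈ Set.Icc 0 t,
        HasDerivAt (fun s => (-1) ^ (n + 1) * doubleTail b1 b2 u v (n + 1) s) (D s) s := by
      intro s ⟨hs, _⟩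
      exact ((hasDerivAt_doubleTail b1 b2 u v s n (by positivity) (by positivity)).const_mul
        ((-1 : ℝ) ^ (n + 1))).congr_deriv (by ring)
    have hderiv_pos : ∀ s ∈ Set.Ioo 0 t, 0 < D s := by
      intro s ⟨hs, _⟩
      have := ih (b1 := b1 + 1) (b2 := b2) (by linarith) hb2 hs
      have := ih (b1 := b1) (b2 := b2 + 1) hb1 (by linarith) hs
      positivity
    simpa [doubleTail_succ_zero] using lt_of_hasDerivAt_pos ht hderiv hderiv_pos

theorem h_tail_sign_general (b1 b2 u v t : ℝ) (n : ℕ) (hb1 : 0 < b1) (hb2 : 0 < b2)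
    (hu : 0 < u) (hv : 0 < v) (ht : 0 < t) :
    0 < (-1 : ℝ) ^ n *
      ((1 + u * t) ^ (-b1) * (1 + v * t) ^ (-b2) -
        ∑ k ∈ Finset.range n, (-1 : ℝ) ^ k * t ^ k *
          ∑ m ∈ Finset.range (k + 1),
            poch b1 m * poch b2 (k - m) * u ^ m * v ^ (k - m) /
              ((Nat.factorial m : ℝ) * (Nat.factorial (k - m) : ℝ))) := by
  simpa only [doubleTail, binomProd, doublePartialSum, doubleCoeff_eq_sum_range] using
    neg_one_pow_mul_doubleTail_pos hu hv n hb1 hb2 ht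

/-- sign of the tail of the double binomial expansion of
`(1+ut)^{-b₁}(1+vt)^{-b₂}`. -/
theorem h_tail_sign (b1 b2 u v t : ℝ) (n : ℕ) (hb1 : 0 < b1) (hb2 : 0 < b2)
    (hu : 0 < u) (hv : 0 < v) (ht : 0 < t) (hut : u * t < 1) (hvt : v * t < 1)
    (hn : 1 ≤ n) :
    0 < (-1 : ℝ) ^ n *
      ((1 + u * t) ^ (-b1) * (1 + v * t) ^ (-b2) -
        ∑ k ∈ Finset.range n, (-1 : ℝ) ^ k * t ^ k *
          ∑ m ∈ Finset.range (k + 1),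
            poch b1 m * poch b2 (k - m) * u ^ m * v ^ (k - m) /
              ((Nat.factorial m : ℝ) * (Nat.factorial (k - m) : ℝ))) :=
  h_tail_sign_general b1 b2 u v t n hb1 hb2 hu hv ht
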